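/- If μ1 ⊑_R μ2 via the subset condition fails, i.e. μ1 ⋢_R μ2, then there exists a witness subset S ⊆ supp(μ1) with μ1(S) > μ2(R(S)). -/

import Mathlib

open Classical

structure FDist (S : Type) [Fintype S] where
  pmf : S → ℝ
  nonneg : ∀ s, 0 ≤ pmf s
  sum_one : ∑ s, pmf s = 1

namespace FDist

variable {S S1 S2 : Type} [Fintype S] [Fintype S1] [Fintype S2]

noncomputable def prob (μ : FDist S) (T : Set S) : ℝ :=
  ∑ s, if s ∈ T then μ.pmf s else 0

def supp (μ : FDist S) : Set S := {s | 0 < μ.pmf s}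

noncomputable def dirac (s : S) : FDist S where
  pmf t := if t = s then 1 else 0
  nonneg t := by split <;> norm_num
  sum_one := by simp

noncomputable def prod (μ1 : FDist S1) (μ2 : FDist S2) : FDist (S1 × S2) where
  pmf p := μ1.pmf p.1 * μ2.pmf p.2
  nonneg p := mul_nonneg (μ1.nonneg _) (μ2.nonneg _)
  sum_one := by
    rw [Fintype.sum_prod_type]
    simp_rw [← Finset.mul_sum, μ2.sum_one, mul_one]
    exact μ1.sum_one

end FDist

/-- Image of a set under a relation: `R(T) = {s2 | ∃ s1 ∈ T, (s1,s2) ∈ R}`. -/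
def relImage {S1 S2 : Type} (R : Set (S1 × S2)) (T : Set S1) : Set S2 :=
  {s2 | ∃ s1 ∈ T, (s1, s2) ∈ R}

/-- The lifting `μ1 ⊑_R μ2` of a relation on states to distributions,
via the Hall-type subset condition. -/
def liftRel {S1 S2 : Type} [Fintype S1] [Fintype S2]
    (R : Set (S1 × S2)) (μ1 : FDist S1) (μ2 : FDist S2) : Prop :=
  ∀ T ⊆ μ1.supp, μ1.prob T ≤ μ2.prob (relImage R T)

/-- A (finite, finitely-branching) labeled probabilistic transition system. -/
structure LPTS (S : Type) (Act : Type) [Fintype S] where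
  start : S
  alpha : Set Act
  trans : S → Act → Set (FDist S)
  trans_mem : ∀ s a μ, μ ∈ trans s a → a ∈ alpha
  finite_trans : ∀ s a, (trans s a).Finite

/-- `R` is a strong simulation between `L1` and `L2`. -/
def StrongSim {S1 S2 Act : Type} [Fintype S1] [Fintype S2]
    (L1 : LPTS S1 Act) (L2 : LPTS S2 Act) (R : Set (S1 × S2)) : Prop :=
  ∀ s1 s2, (s1, s2) ∈ R → ∀ a μ1, μ1 ∈ L1.trans s1 a →
    ∃ μ2 ∈ L2.trans s2 a, liftRel R μ1 μ2

/-- `L2` strongly simulates `L1` (written `L1 ≼ L2`). -/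
def Sim {S1 S2 Act : Type} [Fintype S1] [Fintype S2]
    (L1 : LPTS S1 Act) (L2 : LPTS S2 Act) : Prop :=
  ∃ R, StrongSim L1 L2 R ∧ (L1.start, L2.start) ∈ R

/-- `μ1 ⊑_R μ2` via existence of a weight function with marginals `μ1`, `μ2`
and support contained in `R`. -/
def hasWeight {S1 S2 : Type} [Fintype S1] [Fintype S2]
    (R : Set (S1 × S2)) (μ1 : FDist S1) (μ2 : FDist S2) : Prop :=
  ∃ w : S1 × S2 → ℝ,
    (∀ p, 0 ≤ w p ∧ w p ≤ 1) ∧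
    (∀ s1, μ1.pmf s1 = ∑ s2, w (s1, s2)) ∧
    (∀ s2, μ2.pmf s2 = ∑ s1, w (s1, s2)) ∧
    (∀ p, 0 < w p → p ∈ R)

/-!
View `μ1` and `μ2` as capacities of a bipartite network with edge set `R` and take a subflow
`w` of maximal total value; it exists by compactness. If the total is `1`, `w` is a weight
function. Otherwise some row has slack. Call a column reachable if an alternating path
(forward along `R`, backward along edges carrying flow) leads to it from a row with slack.
Every reachable column is saturated, since otherwise shifting flow along the path would
increase the total. The rows with slack or with flow into a reachable column form the
witness `T`: `R(T)` consists of reachable columns, so its `μ2`-mass is carried entirely by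
flow out of `T`, which falls short of `μ1(T)` by the slack.
-/

open Finset

namespace FDist

variable {S : Type} [Fintype S]

lemma pmf_le_one (μ : FDist S) (s : S) : μ.pmf s ≤ 1 :=
  μ.sum_one ▸ single_le_sum (fun t _ => μ.nonneg t) (mem_univ s)

lemma prob_mono (μ : FDist S) {T T' : Set S} (h : T ⊆ T') : μ.prob T ≤ μ.prob T' :=
  sum_le_sum fun s _ => by
    by_cases hs : s ∈ T
    · simp [hs, h hs]
    · simp only [hs, if_false]
      split_ifs
      exacts [μ.nonneg s, le_rfl]

lemma prob_inter_supp (μ : FDist S) (T : Set S) : μ.prob (T ∩ μ.supp) = μ.prob T :=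
  sum_congr rfl fun s _ => by
    by_cases hs : s ∈ μ.supp
    · simp [hs]
    · have hzero : μ.pmf s = 0 := le_antisymm (not_lt.mp hs) (μ.nonneg s)
      simp [hs, hzero]

end FDist

lemma relImage_mono {S1 S2 : Type} (R : Set (S1 × S2)) {T T' : Set S1} (h : T ⊆ T') :
    relImage R T ⊆ relImage R T' :=
  fun _ ⟨s1, hs1, hR⟩ => ⟨s1, h hs1, hR⟩

section RowColSums

variable {S1 S2 : Type}

def rowSum [Fintype S2] (w : S1 × S2 → ℝ) (s1 : S1) : ℝ := ∑ s2, w (s1, s2)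

def colSum [Fintype S1] (w : S1 × S2 → ℝ) (s2 : S2) : ℝ := ∑ s1, w (s1, s2)

lemma sum_eq_sum_rowSum [Fintype S1] [Fintype S2] (w : S1 × S2 → ℝ) :
    ∑ p, w p = ∑ s1, rowSum w s1 :=
  Fintype.sum_prod_type w

lemma sum_eq_sum_colSum [Fintype S1] [Fintype S2] (w : S1 × S2 → ℝ) :
    ∑ p, w p = ∑ s2, colSum w s2 :=
  Fintype.sum_prod_type_right w

lemma le_rowSum [Fintype S2] {w : S1 × S2 → ℝ} (hw : ∀ p, 0 ≤ w p) (p : S1 × S2) :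
    w p ≤ rowSum w p.1 :=
  single_le_sum (f := fun s2 => w (p.1, s2)) (fun _ _ => hw _) (mem_univ p.2)

lemma rowSum_add [Fintype S2] (w v : S1 × S2 → ℝ) (s1 : S1) :
    rowSum (w + v) s1 = rowSum w s1 + rowSum v s1 :=
  sum_add_distrib

lemma rowSum_sub [Fintype S2] (w v : S1 × S2 → ℝ) (s1 : S1) :
    rowSum (w - v) s1 = rowSum w s1 - rowSum v s1 :=
  sum_sub_distrib ..

lemma colSum_add [Fintype S1] (w v : S1 × S2 → ℝ) (s2 : S2) :
    colSum (w + v) s2 = colSum w s2 + colSum v s2 :=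
  sum_add_distrib

lemma colSum_sub [Fintype S1] (w v : S1 × S2 → ℝ) (s2 : S2) :
    colSum (w - v) s2 = colSum w s2 - colSum v s2 :=
  sum_sub_distrib ..

lemma rowSum_single [Fintype S2] (a : S1) (b : S2) (ε : ℝ) (s1 : S1) :
    rowSum (Pi.single (a, b) ε) s1 = if s1 = a then ε else 0 := by
  by_cases h : s1 = a <;> simp [rowSum, Pi.single_apply, h]

lemma colSum_single [Fintype S1] (a : S1) (b : S2) (ε : ℝ) (s2 : S2) :
    colSum (Pi.single (a, b) ε) s2 = if s2 = b then ε else 0 := by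
  by_cases h : s2 = b <;> simp [colSum, Pi.single_apply, h]

lemma rowSum_add_single_sub_single [Fintype S2] (w : S1 × S2 → ℝ) (a : S1) (b b' : S2)
    (ε : ℝ) (s1 : S1) :
    rowSum (w + Pi.single (a, b) ε - Pi.single (a, b') ε) s1 = rowSum w s1 := by
  rw [rowSum_sub, rowSum_add, rowSum_single, rowSum_single, add_sub_cancel_right]

end RowColSums

section Subflow

variable {S1 S2 : Type} [Fintype S1] [Fintype S2]
  {R : Set (S1 × S2)} {μ1 : FDist S1} {μ2 : FDist S2}

structure IsSubflow (R : Set (S1 × S2)) (μ1 : FDist S1) (μ2 : FDist S2)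
    (w : S1 × S2 → ℝ) : Prop where
  nonneg : ∀ p, 0 ≤ w p
  mem_of_pos : ∀ p, 0 < w p → p ∈ R
  rowSum_le : ∀ s1, rowSum w s1 ≤ μ1.pmf s1
  colSum_le : ∀ s2, colSum w s2 ≤ μ2.pmf s2

namespace IsSubflow

lemma zero : IsSubflow R μ1 μ2 0 where
  nonneg _ := le_rfl
  mem_of_pos _ h := absurd h (lt_irrefl 0)
  rowSum_le s1 := by simpa [rowSum] using μ1.nonneg s1
  colSum_le s2 := by simpa [colSum] using μ2.nonneg s2

lemma le_one {w : S1 × S2 → ℝ} (hw : IsSubflow R μ1 μ2 w) (p : S1 × S2) : w p ≤ 1 :=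
  calc w p ≤ rowSum w p.1 := le_rowSum hw.nonneg p
    _ ≤ μ1.pmf p.1 := hw.rowSum_le p.1
    _ ≤ 1 := μ1.pmf_le_one p.1

lemma sum_le_one {w : S1 × S2 → ℝ} (hw : IsSubflow R μ1 μ2 w) : ∑ p, w p ≤ 1 := by
  rw [sum_eq_sum_rowSum, ← μ1.sum_one]
  exact sum_le_sum fun s1 _ => hw.rowSum_le s1

lemma hasWeight_of_sum_eq_one {w : S1 × S2 → ℝ} (hw : IsSubflow R μ1 μ2 w)
    (h1 : ∑ p, w p = 1) : hasWeight R μ1 μ2 := by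
  have hrow : ∀ s1, rowSum w s1 = μ1.pmf s1 := by
    have := (sum_eq_sum_iff_of_le fun s1 _ => hw.rowSum_le s1).mp
      (by rw [← sum_eq_sum_rowSum, h1, μ1.sum_one])
    exact fun s1 => this s1 (mem_univ s1)
  have hcol : ∀ s2, colSum w s2 = μ2.pmf s2 := by
    have := (sum_eq_sum_iff_of_le fun s2 _ => hw.colSum_le s2).mp
      (by rw [← sum_eq_sum_colSum, h1, μ2.sum_one])
    exact fun s2 => this s2 (mem_univ s2)
  exact ⟨w, fun p => ⟨hw.nonneg p, hw.le_one p⟩, fun s1 => (hrow s1).symm,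
    fun s2 => (hcol s2).symm, hw.mem_of_pos⟩

end IsSubflow

lemma exists_rowSum_lt_of_sum_lt_one (μ1 : FDist S1) {w : S1 × S2 → ℝ} (hw : ∑ p, w p < 1) :
    ∃ s1, rowSum w s1 < μ1.pmf s1 := by
  by_contra! hge
  have : ∑ s1, μ1.pmf s1 ≤ ∑ s1, rowSum w s1 := sum_le_sum fun s1 _ => hge s1
  rw [μ1.sum_one, ← sum_eq_sum_rowSum] at this
  linarith

lemma isClosed_setOf_isSubflow (R : Set (S1 × S2)) (μ1 : FDist S1) (μ2 : FDist S2) :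
    IsClosed {w | IsSubflow R μ1 μ2 w} := by
  have hsupp (p : S1 × S2) : IsClosed {w : S1 × S2 → ℝ | 0 < w p → p ∈ R} := by
    by_cases hp : p ∈ R
    · simp [hp]
    · simpa [hp] using isClosed_le (continuous_apply p) continuous_const
  have hrow (s1 : S1) : Continuous fun w : S1 × S2 → ℝ => rowSum w s1 :=
    continuous_finsetSum _ fun _ _ => continuous_apply _
  have hcol (s2 : S2) : Continuous fun w : S1 × S2 → ℝ => colSum w s2 :=
    continuous_finsetSum _ fun _ _ => continuous_apply _
  have hset : {w | IsSubflow R μ1 μ2 w} =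
      (⋂ p, {w | 0 ≤ w p}) ∩ (⋂ p, {w | 0 < w p → p ∈ R}) ∩
        (⋂ s1, {w | rowSum w s1 ≤ μ1.pmf s1}) ∩
        ⋂ s2, {w | colSum w s2 ≤ μ2.pmf s2} := by
    ext w
    simp only [Set.mem_ofPred_eq, Set.mem_inter_iff, Set.mem_iInter]
    exact ⟨fun ⟨h1, h2, h3, h4⟩ => ⟨⟨⟨h1, h2⟩, h3⟩, h4⟩,
      fun ⟨⟨⟨h1, h2⟩, h3⟩, h4⟩ => ⟨h1, h2, h3, h4⟩⟩
  rw [hset]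
  exact (((isClosed_iInter fun p => isClosed_le continuous_const (continuous_apply p)).inter
    (isClosed_iInter hsupp)).inter
    (isClosed_iInter fun s1 => isClosed_le (hrow s1) continuous_const)).inter
    (isClosed_iInter fun s2 => isClosed_le (hcol s2) continuous_const)

lemma exists_isSubflow_forall_sum_le (R : Set (S1 × S2)) (μ1 : FDist S1) (μ2 : FDist S2) :
    ∃ w, IsSubflow R μ1 μ2 w ∧
      ∀ w', IsSubflow R μ1 μ2 w' → ∑ p, w' p ≤ ∑ p, w p := by
  have hcompact : IsCompact {w | IsSubflow R μ1 μ2 w} :=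
    isCompact_Icc.of_isClosed_subset (isClosed_setOf_isSubflow R μ1 μ2)
      fun w hw => ⟨hw.nonneg, hw.le_one⟩
  obtain ⟨w, hw, hmax⟩ := hcompact.exists_isMaxOn ⟨0, IsSubflow.zero⟩
    (continuous_finsetSum _ fun p _ => continuous_apply p).continuousOn
  exact ⟨w, hw, fun w' hw' => hmax hw'⟩

/-- Column `s2` is the end of an alternating path with `n` backward edges, starting at a row
with slack in `w`: forward edges lie in `R`, backward edges carry positive flow. -/
def Reaches (R : Set (S1 × S2)) (μ1 : FDist S1) (w : S1 × S2 → ℝ) : ℕ → S2 → Prop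
  | 0, s2 => ∃ s1, rowSum w s1 < μ1.pmf s1 ∧ (s1, s2) ∈ R
  | n + 1, s2 => ∃ s2' s1, Reaches R μ1 w n s2' ∧ 0 < w (s1, s2') ∧ (s1, s2) ∈ R

lemma Reaches.mono {w w' : S1 × S2 → ℝ} (hrow : ∀ s1, rowSum w' s1 = rowSum w s1)
    (hpos : ∀ p, 0 < w p → 0 < w' p) :
    ∀ {n s2}, Reaches R μ1 w n s2 → Reaches R μ1 w' n s2
  | 0, _, ⟨s1, hslack, hR⟩ => ⟨s1, hrow s1 ▸ hslack, hR⟩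
  | _ + 1, _, ⟨s2', s1, hreach, hw, hR⟩ =>
    ⟨s2', s1, Reaches.mono hrow hpos hreach, hpos _ hw, hR⟩

lemma IsSubflow.add_single {w : S1 × S2 → ℝ} (hw : IsSubflow R μ1 μ2 w) {a : S1} {b : S2}
    (hab : (a, b) ∈ R) {ε : ℝ} (hε : 0 ≤ ε) (hεa : ε ≤ μ1.pmf a - rowSum w a)
    (hεb : ε ≤ μ2.pmf b - colSum w b) :
    IsSubflow R μ1 μ2 (w + Pi.single (a, b) ε) where
  nonneg p := add_nonneg (hw.nonneg p) (by by_cases hp : p = (a, b) <;> simp [hp, hε])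
  mem_of_pos p hp := by
    by_cases hpab : p = (a, b)
    · exact hpab ▸ hab
    · exact hw.mem_of_pos p (by simpa [hpab] using hp)
  rowSum_le s1 := by
    rw [rowSum_add, rowSum_single]
    split_ifs with h
    · subst h; linarith
    · simpa using hw.rowSum_le s1
  colSum_le s2 := by
    rw [colSum_add, colSum_single]
    split_ifs with h
    · subst h; linarith
    · simpa using hw.colSum_le s2

lemma IsSubflow.add_single_sub_single {w : S1 × S2 → ℝ} (hw : IsSubflow R μ1 μ2 w) {a : S1}
    {b b' : S2} (hab : (a, b) ∈ R) (hbb' : b ≠ b') {ε : ℝ} (hε : 0 ≤ ε)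
    (hεa : ε ≤ w (a, b'))
    (hεb : ε ≤ μ2.pmf b - colSum w b) :
    IsSubflow R μ1 μ2 (w + Pi.single (a, b) ε - Pi.single (a, b') ε) where
  nonneg p := by
    by_cases hp : p = (a, b')
    · subst hp; simpa [Prod.ext_iff, hbb'] using hεa
    · have := hw.nonneg p
      by_cases hp' : p = (a, b)
      · subst hp'; simp [Prod.ext_iff, hbb']; linarith
      · simpa [hp, hp'] using this
  mem_of_pos p hp := by
    by_cases hpab : p = (a, b)
    · exact hpab ▸ hab
    · refine hw.mem_of_pos p ?_
      by_cases hp' : p = (a, b')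
      · subst hp'; simp [hpab] at hp; linarith
      · simpa [hpab, hp'] using hp
  rowSum_le s1 := rowSum_add_single_sub_single w a b b' ε s1 ▸ hw.rowSum_le s1
  colSum_le s2 := by
    have := hw.colSum_le s2
    rw [colSum_sub, colSum_add, colSum_single, colSum_single]
    split_ifs with h h' <;> first | (subst h; linarith) | linarith

lemma IsSubflow.exists_sum_lt_of_reaches (n : ℕ) :
    ∀ {w : S1 × S2 → ℝ} {s2 : S2}, IsSubflow R μ1 μ2 w → Reaches R μ1 w n s2 →
      colSum w s2 < μ2.pmf s2 → ∃ w', IsSubflow R μ1 μ2 w' ∧ ∑ p, w p < ∑ p, w' p := by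
  induction n with
  | zero =>
    rintro w s2 hw ⟨s1, hslack, hR⟩ hcol
    set ε := min (μ1.pmf s1 - rowSum w s1) (μ2.pmf s2 - colSum w s2)
    have hε : 0 < ε := lt_min (sub_pos.mpr hslack) (sub_pos.mpr hcol)
    refine ⟨_, hw.add_single hR hε.le (min_le_left _ _) (min_le_right _ _), ?_⟩
    simp only [Pi.add_apply, sum_add_distrib, sum_pi_single', if_pos (mem_univ _)]
    linarith
  | succ n ih =>
    rintro w s2 hw ⟨s2', s1, hreach, hpos, hR⟩ hcol
    by_cases hs2 : s2' = s2
    · exact ih hw (hs2 ▸ hreach) hcol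
    -- Move half of what is possible onto `(s1, s2)`; `(s1, s2')` keeps positive flow.
    set ε := min (w (s1, s2')) (μ2.pmf s2 - colSum w s2) / 2
    have hε : 0 < ε := half_pos (lt_min hpos (sub_pos.mpr hcol))
    have hεw : ε < w (s1, s2') := (half_lt_self (lt_min hpos (sub_pos.mpr hcol))).trans_le
      (min_le_left _ _)
    have hεcol : ε ≤ μ2.pmf s2 - colSum w s2 :=
      (half_le_self (lt_min hpos (sub_pos.mpr hcol)).le).trans (min_le_right _ _)
    set w' := w + Pi.single (s1, s2) ε - Pi.single (s1, s2') ε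
    have hw' : IsSubflow R μ1 μ2 w' :=
      hw.add_single_sub_single hR (Ne.symm hs2) hε.le hεw.le hεcol
    have hrow (u : S1) : rowSum w' u = rowSum w u :=
      rowSum_add_single_sub_single w s1 s2 s2' ε u
    have hpos' (p : S1 × S2) (hp : 0 < w p) : 0 < w' p := by
      by_cases hp' : p = (s1, s2')
      · subst hp'; simpa [w', Prod.ext_iff, hs2] using hεw
      · have hsingle : 0 ≤ (Pi.single (s1, s2) ε : S1 × S2 → ℝ) p := by
          rw [Pi.single_apply]; split_ifs <;> linarith
        simp only [w', Pi.sub_apply, Pi.add_apply, Pi.single_eq_of_ne hp']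
        linarith
    have hcol' : colSum w' s2' < μ2.pmf s2' := by
      have := hw.colSum_le s2'
      rw [colSum_sub, colSum_add, colSum_single, colSum_single, if_neg hs2, if_pos rfl]
      linarith
    obtain ⟨w'', hw'', hlt⟩ := ih hw' (hreach.mono hrow hpos') hcol'
    refine ⟨w'', hw'', lt_of_eq_of_lt ?_ hlt⟩
    simp only [sum_eq_sum_rowSum, hrow]

lemma IsSubflow.colSum_eq_of_reaches {w : S1 × S2 → ℝ} (hw : IsSubflow R μ1 μ2 w)
    (hmax : ∀ w', IsSubflow R μ1 μ2 w' → ∑ p, w' p ≤ ∑ p, w p) {n : ℕ} {s2 : S2}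
    (hreach : Reaches R μ1 w n s2) : colSum w s2 = μ2.pmf s2 := by
  refine (hw.colSum_le s2).antisymm (not_lt.mp fun hlt => ?_)
  obtain ⟨w', hw', hgt⟩ := hw.exists_sum_lt_of_reaches n hreach hlt
  exact (hmax w' hw').not_gt hgt

lemma IsSubflow.exists_prob_relImage_lt {w : S1 × S2 → ℝ} (hw : IsSubflow R μ1 μ2 w)
    {s0 : S1} (hs0 : rowSum w s0 < μ1.pmf s0)
    (hsat : ∀ n s2, Reaches R μ1 w n s2 → colSum w s2 = μ2.pmf s2) :
    ∃ T, μ2.prob (relImage R T) < μ1.prob T := by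
  set T : Set S1 :=
    {s1 | rowSum w s1 < μ1.pmf s1 ∨ ∃ n s2, Reaches R μ1 w n s2 ∧ 0 < w (s1, s2)}
  set B := relImage R T
  have hreach : ∀ s2 ∈ B, ∃ n, Reaches R μ1 w n s2 := by
    rintro s2 ⟨s1, hslack | ⟨n, s2', hreach, hpos⟩, hR⟩
    exacts [⟨0, s1, hslack, hR⟩, ⟨n + 1, s2', s1, hreach, hpos, hR⟩]
  -- Every column of `B` is saturated, and all flow into `B` comes from rows in `T`.
  have hB : μ2.prob B = ∑ s1, ∑ s2, if s2 ∈ B then w (s1, s2) else 0 := by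
    rw [FDist.prob, sum_comm]
    refine sum_congr rfl fun s2 _ => ?_
    split_ifs with h
    · obtain ⟨n, hn⟩ := hreach s2 h
      exact (hsat n s2 hn).symm
    · simp
  have hle_rowSum (s1 : S1) : (∑ s2, if s2 ∈ B then w (s1, s2) else 0) ≤ rowSum w s1 :=
    sum_le_sum fun s2 _ => by split_ifs; exacts [le_rfl, hw.nonneg _]
  have hout (s1 : S1) (hs1 : s1 ∉ T) : (∑ s2, if s2 ∈ B then w (s1, s2) else 0) = 0 :=
    sum_eq_zero fun s2 _ => by
      split_ifs with h
      · obtain ⟨n, hn⟩ := hreach s2 h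
        refine ((hw.nonneg _).lt_or_eq.resolve_left fun hpos => ?_).symm
        exact hs1 (Or.inr ⟨n, s2, hn, hpos⟩)
      · rfl
  refine ⟨T, ?_⟩
  rw [hB, FDist.prob]
  refine sum_lt_sum (fun s1 _ => ?_) ⟨s0, mem_univ _, ?_⟩
  · split_ifs with h
    exacts [(hle_rowSum s1).trans (hw.rowSum_le s1), (hout s1 h).le]
  · rw [if_pos (show s0 ∈ T from Or.inl hs0)]
    exact (hle_rowSum s0).trans_lt hs0

end Subflow

/-- If `μ1 ⋢_R μ2` then there is a witness subset `T` of the support of `μ1`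
with `μ1(T) > μ2(R(T))`. -/
theorem witness_of_not_hasWeight {S1 S2 : Type} [Fintype S1] [Fintype S2]
    (R : Set (S1 × S2)) (μ1 : FDist S1) (μ2 : FDist S2)
    (h : ¬ hasWeight R μ1 μ2) :
    ∃ T ⊆ μ1.supp, μ2.prob (relImage R T) < μ1.prob T := by
  obtain ⟨w, hw, hmax⟩ := exists_isSubflow_forall_sum_le R μ1 μ2
  have hlt : ∑ p, w p < 1 :=
    hw.sum_le_one.lt_of_ne fun h1 => h (hw.hasWeight_of_sum_eq_one h1)
  obtain ⟨s0, hs0⟩ := exists_rowSum_lt_of_sum_lt_one μ1 hlt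
  obtain ⟨T, hT⟩ := hw.exists_prob_relImage_lt hs0 fun _ _ => hw.colSum_eq_of_reaches hmax
  refine ⟨T ∩ μ1.supp, Set.inter_subset_right, ?_⟩
  calc μ2.prob (relImage R (T ∩ μ1.supp))
      ≤ μ2.prob (relImage R T) := μ2.prob_mono (relImage_mono R Set.inter_subset_left)
    _ < μ1.prob T := hT
    _ = μ1.prob (T ∩ μ1.supp) := (μ1.prob_inter_supp T).symm
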